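/- arXiv:1903.06286 — 2 statements merged into one kernel-verified Lean document; each statement's English description precedes it below -/
import Mathlib

section
/- Suppose m is differentiable with derivative m′(y) < 1 for all y ∈ ℝ (Stationarity), and ν₁((−∞, y]) ≤ ν₀((−∞, y]) for all y ∈ ℝ (Stochastic Monotonicity, version (b)). Then μ_DID ≥ μ_LDV; consequently, for any real number μ₁ (the mean treated outcome E(Y_{t+1} | G = 1)), the estimands τ_DID := μ₁ − μ_DID and τ_LDV := μ₁ − μ_LDV satisfy τ_DID ≤ τ_LDV. -/
/-!
Since `m′ < 1`, the function `Δ = m - id` is decreasing, and `μ_DID - μ_LDV = ∫ Δ dν₀ - ∫ Δ dν₁`.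
The hypothesis says that `ν₁` first-order stochastically dominates `ν₀`, so every upper set has
larger `ν₁`-mass and every lower set smaller `ν₁`-mass. By the layer-cake formula this transfers
to the positive and negative parts of any integrable decreasing function, so
`∫ Δ dν₁ ≤ ∫ Δ dν₀`.
-/

open MeasureTheory Set

theorem IsLowerSet.eq_empty_or_univ_or_Iic_or_Iio {α : Type*} [ConditionallyCompleteLinearOrder α]
    {S : Set α} (hS : IsLowerSet S) :
    S = ∅ ∨ S = univ ∨ (∃ c, S = Iic c) ∨ ∃ c, S = Iio c := by
  have hS_eq : ⋃ x ∈ S, Iic x = S :=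
    subset_antisymm (iUnion₂_subset fun x hx _ hy => hS hy hx)
      fun x hx => mem_biUnion hx self_mem_Iic
  rcases S.eq_empty_or_nonempty with hempty | hne
  · exact Or.inl hempty
  by_cases hbdd : BddAbove S
  · have hlub := isLUB_csSup hne hbdd
    by_cases hmem : sSup S ∈ S
    · exact Or.inr <| Or.inr <| Or.inl ⟨_, hS_eq.symm.trans (hlub.biUnion_Iic_eq_Iic hmem)⟩
    · exact Or.inr <| Or.inr <| Or.inr ⟨_, hS_eq.symm.trans (hlub.biUnion_Iic_eq_Iio hmem)⟩
  · refine Or.inr <| Or.inl <| eq_univ_of_forall fun x => ?_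
    obtain ⟨y, hy, hxy⟩ := not_bddAbove_iff.1 hbdd x
    exact hS hxy.le hy

theorem lintegral_ofReal_le_of_forall_measure_le {α : Type*} [MeasurableSpace α]
    {μ ν : Measure α} {g : α → ℝ} (hg : Measurable g)
    (h : ∀ t > 0, μ {a | t ≤ g a} ≤ ν {a | t ≤ g a}) :
    ∫⁻ a, ENNReal.ofReal (g a) ∂μ ≤ ∫⁻ a, ENNReal.ofReal (g a) ∂ν := by
  have layer_cake : ∀ ρ : Measure α,
      ∫⁻ a, ENNReal.ofReal (g a) ∂ρ = ∫⁻ t in Ioi 0, ρ {a | t ≤ g a} := by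
    intro ρ
    calc ∫⁻ a, ENNReal.ofReal (g a) ∂ρ = ∫⁻ a, ENNReal.ofReal (max (g a) 0) ∂ρ := by simp
      _ = ∫⁻ t in Ioi 0, ρ {a | t ≤ max (g a) 0} :=
        lintegral_eq_lintegral_meas_le ρ (ae_of_all _ fun a => le_max_right _ _)
          (hg.max measurable_const).aemeasurable
      _ = ∫⁻ t in Ioi 0, ρ {a | t ≤ g a} := by
        refine setLIntegral_congr_fun measurableSet_Ioi fun t ht => ?_
        simp [not_le.2 (mem_Ioi.1 ht)]
  rw [layer_cake, layer_cake]
  exact setLIntegral_mono' measurableSet_Ioi h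

section StochasticDominance

variable {ν₀ ν₁ : Measure ℝ}

theorem measure_univ_le_of_forall_measure_Iic_le (hcdf : ∀ y, ν₁ (Iic y) ≤ ν₀ (Iic y)) :
    ν₁ univ ≤ ν₀ univ := by
  rw [← iUnion_Iic, monotone_Iic.measure_iUnion, monotone_Iic.measure_iUnion]
  exact iSup_mono hcdf

theorem measure_Iio_le_of_forall_measure_Iic_le (hcdf : ∀ y, ν₁ (Iic y) ≤ ν₀ (Iic y)) (c : ℝ) :
    ν₁ (Iio c) ≤ ν₀ (Iio c) := by
  obtain ⟨u, hu_mono, hu_lt, hu_lim⟩ := exists_seq_strictMono_tendsto c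
  have hIic_mono : Monotone fun n => Iic (u n) := fun _ _ hmn =>
    Iic_subset_Iic.2 (hu_mono.monotone hmn)
  have hIio : ⋃ n, Iic (u n) = Iio c := by
    rw [← biUnion_range]
    exact (isLUB_of_tendsto_atTop hu_mono.monotone hu_lim).biUnion_Iic_eq_Iio
      fun ⟨n, hn⟩ => (hu_lt n).ne hn
  rw [← hIio, hIic_mono.measure_iUnion, hIic_mono.measure_iUnion]
  exact iSup_mono fun n => hcdf (u n)

theorem measure_le_of_isLowerSet (hcdf : ∀ y, ν₁ (Iic y) ≤ ν₀ (Iic y)) {S : Set ℝ}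
    (hS : IsLowerSet S) : ν₁ S ≤ ν₀ S := by
  rcases hS.eq_empty_or_univ_or_Iic_or_Iio with rfl | rfl | ⟨c, rfl⟩ | ⟨c, rfl⟩
  · simp
  · exact measure_univ_le_of_forall_measure_Iic_le hcdf
  · exact hcdf c
  · exact measure_Iio_le_of_forall_measure_Iic_le hcdf c

variable [IsProbabilityMeasure ν₀] [IsProbabilityMeasure ν₁]

theorem measure_le_of_isUpperSet (hcdf : ∀ y, ν₁ (Iic y) ≤ ν₀ (Iic y)) {U : Set ℝ}
    (hU : IsUpperSet U) : ν₀ U ≤ ν₁ U := by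
  have hmeas : MeasurableSet Uᶜ := hU.compl.ordConnected.measurableSet
  rw [← compl_compl U, prob_compl_eq_one_sub hmeas, prob_compl_eq_one_sub hmeas]
  exact tsub_le_tsub_left (measure_le_of_isLowerSet hcdf hU.compl) 1

theorem integral_le_integral_of_antitone (hcdf : ∀ y, ν₁ (Iic y) ≤ ν₀ (Iic y)) {g : ℝ → ℝ}
    (hg : Antitone g) (hg₀ : Integrable g ν₀) (hg₁ : Integrable g ν₁) :
    ∫ y, g y ∂ν₁ ≤ ∫ y, g y ∂ν₀ := by
  have hpos : ∫⁻ y, ENNReal.ofReal (g y) ∂ν₁ ≤ ∫⁻ y, ENNReal.ofReal (g y) ∂ν₀ :=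
    lintegral_ofReal_le_of_forall_measure_le hg.measurable fun t _ =>
      measure_le_of_isLowerSet hcdf fun _ _ hba ha => le_trans ha (hg hba)
  have hneg : ∫⁻ y, ENNReal.ofReal (-g y) ∂ν₀ ≤ ∫⁻ y, ENNReal.ofReal (-g y) ∂ν₁ :=
    lintegral_ofReal_le_of_forall_measure_le hg.measurable.neg fun t _ =>
      measure_le_of_isUpperSet hcdf fun _ _ hab ha => le_trans ha (neg_le_neg (hg hab))
  rw [integral_eq_lintegral_pos_part_sub_lintegral_neg_part hg₀,
    integral_eq_lintegral_pos_part_sub_lintegral_neg_part hg₁]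
  exact sub_le_sub (ENNReal.toReal_mono hg₀.lintegral_lt_top.ne hpos)
    (ENNReal.toReal_mono hg₁.neg.lintegral_lt_top.ne hneg)

end StochasticDominance

theorem strictAnti_sub_id_of_deriv_lt_one {m : ℝ → ℝ} (hm : Differentiable ℝ m)
    (hderiv : ∀ y, deriv m y < 1) : StrictAnti fun y => m y - y :=
  strictAnti_of_deriv_neg fun y => by
    rw [deriv_fun_sub (hm y) differentiableAt_fun_id, deriv_id'']
    linarith [hderiv y]

/-- Theorem 1, case (b): under Stationarity (`m` differentiable with `m′ < 1`) and
Stochastic Monotonicity (b) (`ν₁((−∞,y]) ≤ ν₀((−∞,y])`), the counterfactual means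
satisfy `μ_DID ≥ μ_LDV`, hence `τ_DID ≤ τ_LDV` for any treated mean `μ₁`. -/
theorem bracketing_nonparametric_b (ν₀ ν₁ : Measure ℝ)
    [IsProbabilityMeasure ν₀] [IsProbabilityMeasure ν₁]
    (m : ℝ → ℝ) (hdiff : Differentiable ℝ m) (hderiv : ∀ y : ℝ, deriv m y < 1)
    (hid₀ : Integrable (fun y : ℝ => y) ν₀) (hid₁ : Integrable (fun y : ℝ => y) ν₁)
    (hm₀ : Integrable m ν₀) (hm₁ : Integrable m ν₁)
    (hmono : ∀ y : ℝ, ν₁ (Set.Iic y) ≤ ν₀ (Set.Iic y))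
    (μDID μLDV : ℝ)
    (hDID : μDID = (∫ y, y ∂ν₁) + (∫ y, m y ∂ν₀) - (∫ y, y ∂ν₀))
    (hLDV : μLDV = ∫ y, m y ∂ν₁) :
    μDID ≥ μLDV ∧ ∀ μ₁ : ℝ, μ₁ - μDID ≤ μ₁ - μLDV := by
  have key := integral_le_integral_of_antitone hmono
    (strictAnti_sub_id_of_deriv_lt_one hdiff hderiv).antitone (hm₀.sub hid₀) (hm₁.sub hid₁)
  rw [integral_sub hm₀ hid₀, integral_sub hm₁ hid₁] at key
  subst hDID hLDV
  exact ⟨by linarith, fun μ₁ => by linarith⟩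
end

section
/- Suppose m is differentiable with derivative m′(y) < 1 for all y ∈ ℝ (Stationarity), and ν₁((−∞, y]) ≥ ν₀((−∞, y]) for all y ∈ ℝ (Stochastic Monotonicity, version (a)). If μ₁ ≥ 0 (the mean treated outcome E(Y_{t+1} | G = 1)) and μ_DID > 0, then the ratio estimands γ_DID := μ₁ / μ_DID and γ_LDV := μ₁ / μ_LDV satisfy γ_DID ≥ γ_LDV. -/
/-!
Stationarity makes `Δ y = m y - y` decreasing, so `μ_LDV - μ_DID = ∫ Δ dν₁ - ∫ Δ dν₀ ≥ 0` is
first-order stochastic dominance: the treated lag is stochastically smaller. By the layer-cake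
formula this reduces to comparing superlevel sets; those of the positive part of `Δ` are lower
sets, of which `ν₁` has more mass than `ν₀`, and those of the negative part are upper sets, where
the comparison reverses. Hence `0 < μ_DID ≤ μ_LDV`, and dividing `μ₁ ≥ 0` by both gives the claim.
-/

open MeasureTheory Set

theorem IsLowerSet.exists_countable_eq_biUnion_Iic {S : Set ℝ} (hS : IsLowerSet S) :
    ∃ T ⊆ S, T.Countable ∧ S = ⋃ x ∈ T, Iic x := by
  -- the rationals in `S` together with the maximum of `S`, if there is one
  refine ⟨S ∩ (range ((↑) : ℚ → ℝ) ∪ {sSup S}), inter_subset_left,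
    (countable_range _).union (countable_singleton _) |>.mono inter_subset_right, ?_⟩
  refine Subset.antisymm (fun y hy => ?_) (iUnion₂_subset fun x hx => hS.Iic_subset hx.1)
  simp only [mem_iUnion₂, mem_Iic]
  by_cases hmax : ∃ z ∈ S, y < z
  · obtain ⟨z, hz, hyz⟩ := hmax
    obtain ⟨q, hyq, hqz⟩ := exists_rat_btwn hyz
    exact ⟨q, ⟨hS hqz.le hz, Or.inl (mem_range_self q)⟩, hyq.le⟩
  · push Not at hmax
    exact ⟨y, ⟨hy, Or.inr (IsGreatest.csSup_eq ⟨hy, hmax⟩).symm⟩, le_rfl⟩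

theorem IsLowerSet.measure_le_of_forall_measure_Iic_le {ν₀ ν₁ : Measure ℝ}
    (hmono : ∀ y, ν₀ (Iic y) ≤ ν₁ (Iic y)) {S : Set ℝ} (hS : IsLowerSet S) : ν₀ S ≤ ν₁ S := by
  obtain ⟨T, -, hT, rfl⟩ := hS.exists_countable_eq_biUnion_Iic
  have hdir : DirectedOn (Function.onFun (· ⊆ ·) Iic) T :=
    fun x hx y hy => ⟨max x y, max_rec' (· ∈ T) hx hy, Iic_subset_Iic.2 (le_max_left x y),
      Iic_subset_Iic.2 (le_max_right x y)⟩
  rw [measure_biUnion_eq_iSup hT hdir, measure_biUnion_eq_iSup hT hdir]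
  exact iSup₂_mono fun y _ => hmono y

theorem IsUpperSet.measure_le_of_forall_measure_Iic_le {ν₀ ν₁ : Measure ℝ}
    [IsProbabilityMeasure ν₀] [IsProbabilityMeasure ν₁]
    (hmono : ∀ y, ν₀ (Iic y) ≤ ν₁ (Iic y)) {U : Set ℝ} (hU : IsUpperSet U) : ν₁ U ≤ ν₀ U := by
  have hUc : MeasurableSet Uᶜ := hU.compl.ordConnected.measurableSet
  rw [← compl_compl U, prob_compl_eq_one_sub hUc, prob_compl_eq_one_sub hUc]
  exact tsub_le_tsub_left (hU.compl.measure_le_of_forall_measure_Iic_le hmono) 1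

theorem integral_le_integral_of_forall_measure_lt_le {α : Type*} [MeasurableSpace α]
    {μ ν : Measure α} {f : α → ℝ} (hf : 0 ≤ f) (hμ : Integrable f μ) (hν : Integrable f ν)
    (h : ∀ t, μ {a | t < f a} ≤ ν {a | t < f a}) : ∫ a, f a ∂μ ≤ ∫ a, f a ∂ν := by
  have hfμ : 0 ≤ᵐ[μ] f := .of_forall hf
  have hfν : 0 ≤ᵐ[ν] f := .of_forall hf
  rw [integral_eq_lintegral_of_nonneg_ae hfμ hμ.aestronglyMeasurable,
    integral_eq_lintegral_of_nonneg_ae hfν hν.aestronglyMeasurable,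
    lintegral_eq_lintegral_meas_lt μ hfμ hμ.aemeasurable,
    lintegral_eq_lintegral_meas_lt ν hfν hν.aemeasurable]
  refine ENNReal.toReal_mono ?_ (lintegral_mono h)
  rw [← lintegral_eq_lintegral_meas_lt ν hfν hν.aemeasurable]
  exact hν.lintegral_lt_top.ne

theorem Antitone.integral_le_integral_of_forall_measure_Iic_le {ν₀ ν₁ : Measure ℝ}
    [IsProbabilityMeasure ν₀] [IsProbabilityMeasure ν₁]
    (hmono : ∀ y, ν₀ (Iic y) ≤ ν₁ (Iic y)) {g : ℝ → ℝ} (hg : Antitone g)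
    (h₀ : Integrable g ν₀) (h₁ : Integrable g ν₁) :
    ∫ y, g y ∂ν₀ ≤ ∫ y, g y ∂ν₁ := by
  rw [integral_eq_integral_pos_part_sub_integral_neg_part h₀,
    integral_eq_integral_pos_part_sub_integral_neg_part h₁]
  have hpos : ∫ y, ((g y).toNNReal : ℝ) ∂ν₀ ≤ ∫ y, ((g y).toNNReal : ℝ) ∂ν₁ :=
    integral_le_integral_of_forall_measure_lt_le (fun _ => NNReal.coe_nonneg _)
      h₀.real_toNNReal h₁.real_toNNReal fun t =>
        IsLowerSet.measure_le_of_forall_measure_Iic_le hmono fun x y hxy hy =>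
          hy.trans_le (NNReal.coe_le_coe.2 (Real.toNNReal_mono (hg hxy)))
  have hneg : ∫ y, ((-g y).toNNReal : ℝ) ∂ν₁ ≤ ∫ y, ((-g y).toNNReal : ℝ) ∂ν₀ :=
    integral_le_integral_of_forall_measure_lt_le (fun _ => NNReal.coe_nonneg _)
      h₁.neg.real_toNNReal h₀.neg.real_toNNReal fun t =>
        IsUpperSet.measure_le_of_forall_measure_Iic_le hmono fun x y hxy hx =>
          hx.trans_le (NNReal.coe_le_coe.2 (Real.toNNReal_mono (neg_le_neg (hg hxy))))
  linarith

theorem antitone_sub_id_of_deriv_lt_one {m : ℝ → ℝ} (hm : Differentiable ℝ m)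
    (h : ∀ y, deriv m y < 1) : Antitone fun y => m y - y := by
  refine (strictAnti_of_deriv_neg fun y => ?_).antitone
  rw [deriv_fun_sub (hm y) differentiableAt_fun_id, deriv_id'', sub_neg]
  exact h y

/-- Theorem 1, ratio version, case (a): under Stationarity and Stochastic
Monotonicity (a), if `μ₁ ≥ 0` and `μ_DID > 0` then `γ_DID = μ₁/μ_DID ≥ μ₁/μ_LDV = γ_LDV`. -/
theorem bracketing_ratio_a (ν₀ ν₁ : Measure ℝ)
    [IsProbabilityMeasure ν₀] [IsProbabilityMeasure ν₁]
    (m : ℝ → ℝ) (hdiff : Differentiable ℝ m) (hderiv : ∀ y : ℝ, deriv m y < 1)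
    (hid₀ : Integrable (fun y : ℝ => y) ν₀) (hid₁ : Integrable (fun y : ℝ => y) ν₁)
    (hm₀ : Integrable m ν₀) (hm₁ : Integrable m ν₁)
    (hmono : ∀ y : ℝ, ν₀ (Set.Iic y) ≤ ν₁ (Set.Iic y))
    (μDID μLDV : ℝ)
    (hDID : μDID = (∫ y, y ∂ν₁) + (∫ y, m y ∂ν₀) - (∫ y, y ∂ν₀))
    (hLDV : μLDV = ∫ y, m y ∂ν₁)
    (μ₁ : ℝ) (hμ₁ : 0 ≤ μ₁) (hpos : 0 < μDID) :
    μ₁ / μDID ≥ μ₁ / μLDV := by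
  have hΔ : ∫ y, (m y - y) ∂ν₀ ≤ ∫ y, (m y - y) ∂ν₁ :=
    (antitone_sub_id_of_deriv_lt_one hdiff hderiv).integral_le_integral_of_forall_measure_Iic_le
      hmono (hm₀.sub hid₀) (hm₁.sub hid₁)
  rw [integral_sub hm₀ hid₀, integral_sub hm₁ hid₁] at hΔ
  have hle : μDID ≤ μLDV := by
    rw [hDID, hLDV]
    linarith
  exact div_le_div_of_nonneg_left hμ₁ hpos hle
end
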